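/- arXiv:2211.10776 — 6 statements merged into one kernel-verified Lean document; each statement's English description precedes it below -/
import Mathlib

section
/- Let {f_Z(· | ω)}_{ω ∈ Θ} be a family of probability density functions on ℝ, indexed measurably by ω = (w, ξ₁, ξ₂) ∈ Θ, such that each f_Z(· | ω) has its global mode at 0, i.e., f_Z(0 | ω) ≥ f_Z(y | ω) for all y ∈ ℝ and all ω ∈ Θ. Let p be a probability density on Θ. Fix n ≥ 1 and real observations y₁, …, y_n. If ∫_Θ (f_Z(0 | ω))^{n−1} p(ω) dω < ∞, then ∫_Θ ∫_ℝ ∏_{i=1}^{n} f_Z(y_i − θ | ω) p(ω) dθ dω < ∞; that is, the posterior distribution of (θ, ω) under the improper flat prior p(θ) ∝ 1 on the mode θ is proper. -/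
open MeasureTheory
open scoped ENNReal

lemma lintegral_sub_left_eq_self' (f : ℝ → ℝ≥0∞) (hf : Measurable f) (c : ℝ) :
    ∫⁻ x : ℝ, f (c - x) = ∫⁻ x : ℝ, f x := by
  have h1 : ∫⁻ x : ℝ, f (c - x) = ∫⁻ x : ℝ, f (c + x) := by
    rw [← Measure.map_neg_eq_self (volume : Measure ℝ)]
    rw [lintegral_map (by fun_prop) measurable_neg]
    simp [sub_eq_add_neg]
  rw [h1]
  exact lintegral_add_left_eq_self f c

/-- Posterior propriety under a flat prior on the mode (Theorem 1). -/
theorem posterior_propriety_flat_prior_mode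
    {Θ : Type*} [MeasurableSpace Θ] (ν : Measure Θ)
    (fZ : Θ → ℝ → ℝ) (p : Θ → ℝ)
    (hfZ_meas : Measurable (Function.uncurry fZ))
    (hfZ_nonneg : ∀ ω y, 0 ≤ fZ ω y)
    (hfZ_density : ∀ ω, ∫ y, fZ ω y = 1)
    (hmode : ∀ ω y, fZ ω y ≤ fZ ω 0)
    (hp_nonneg : ∀ ω, 0 ≤ p ω)
    (hp_density : ∫⁻ ω, ENNReal.ofReal (p ω) ∂ν = 1)
    (n : ℕ) (hn : 1 ≤ n) (y : Fin n → ℝ)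
    (hfin : ∫⁻ ω, ENNReal.ofReal ((fZ ω 0) ^ (n - 1) * p ω) ∂ν < ⊤) :
    ∫⁻ ω, (∫⁻ θ : ℝ, ENNReal.ofReal ((∏ i, fZ ω (y i - θ)) * p ω)) ∂ν < ⊤ := by
  have key : ∀ ω, (∫⁻ θ : ℝ, ENNReal.ofReal ((∏ i, fZ ω (y i - θ)) * p ω))
      ≤ ENNReal.ofReal ((fZ ω 0) ^ (n - 1) * p ω) := by
    intro ω
    have hmeasω : Measurable (fZ ω) := hfZ_meas.comp (measurable_const.prodMk measurable_id)
    have i0 : Fin n := ⟨0, hn⟩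
    -- pointwise bound on the product
    have hbound : ∀ θ : ℝ, (∏ i, fZ ω (y i - θ)) ≤ (fZ ω 0) ^ (n - 1) * fZ ω (y i0 - θ) := by
      intro θ
      rw [← Finset.mul_prod_erase Finset.univ _ (Finset.mem_univ i0), mul_comm]
      apply mul_le_mul_of_nonneg_right _ (hfZ_nonneg ω _)
      calc ∏ i ∈ Finset.univ.erase i0, fZ ω (y i - θ)
          ≤ ∏ _i ∈ Finset.univ.erase i0, fZ ω 0 :=
            Finset.prod_le_prod (fun i _ => hfZ_nonneg ω _) (fun i _ => hmode ω _)
        _ = (fZ ω 0) ^ (n - 1) := by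
            rw [Finset.prod_const, Finset.card_erase_of_mem (Finset.mem_univ i0)]
            simp
    have hint : Integrable (fZ ω) := by
      by_contra h
      have := hfZ_density ω
      rw [integral_undef h] at this
      norm_num at this
    have h1 : ∫⁻ θ : ℝ, ENNReal.ofReal (fZ ω (y i0 - θ)) = 1 := by
      rw [lintegral_sub_left_eq_self' (fun z => ENNReal.ofReal (fZ ω z))
        (by fun_prop) (y i0)]
      rw [← ofReal_integral_eq_lintegral_ofReal hint
        (Filter.Eventually.of_forall (hfZ_nonneg ω)), hfZ_density ω, ENNReal.ofReal_one]
    calc (∫⁻ θ : ℝ, ENNReal.ofReal ((∏ i, fZ ω (y i - θ)) * p ω))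
        ≤ ∫⁻ θ : ℝ, ENNReal.ofReal ((fZ ω 0) ^ (n - 1) * p ω)
            * ENNReal.ofReal (fZ ω (y i0 - θ)) := by
          apply lintegral_mono
          intro θ
          dsimp only
          rw [← ENNReal.ofReal_mul (mul_nonneg (pow_nonneg (hfZ_nonneg ω 0) _) (hp_nonneg ω))]
          apply ENNReal.ofReal_le_ofReal
          calc (∏ i, fZ ω (y i - θ)) * p ω
              ≤ ((fZ ω 0) ^ (n - 1) * fZ ω (y i0 - θ)) * p ω := by
                apply mul_le_mul_of_nonneg_right (hbound θ) (hp_nonneg ω)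
            _ = (fZ ω 0) ^ (n - 1) * p ω * fZ ω (y i0 - θ) := by ring
      _ = ENNReal.ofReal ((fZ ω 0) ^ (n - 1) * p ω) := by
          rw [lintegral_const_mul _ (by fun_prop), h1, mul_one]
  exact lt_of_le_of_lt (lintegral_mono key) hfin
end

section
/- Let {f_Z(· | ω)}_{ω ∈ Θ} be a family of probability density functions on ℝ, indexed measurably by ω = (w, ξ₁, ξ₂) ∈ Θ, such that each f_Z(· | ω) has its global mode at 0, i.e., f_Z(0 | ω) ≥ f_Z(y | ω) for all y ∈ ℝ and all ω ∈ Θ. Let p be a probability density on Θ. Let X be an n × p real matrix of full rank with p ≤ n and finite entries, with rows X₁ᵀ, …, X_nᵀ, and fix observations y₁, …, y_n ∈ ℝ. If ∫_Θ (f_Z(0 | ω))^{n−p} p(ω) dω < ∞, then ∫_Θ ∫_{ℝ^p} ∏_{i=1}^{n} f_Z(y_i − X_iᵀβ | ω) p(ω) dβ dω < ∞; that is, the posterior distribution of (β, ω) under the improper flat prior p(β) ∝ 1 on the regression coefficients β ∈ ℝ^p is proper. -/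
open MeasureTheory
open scoped Matrix

/-! Choose `q` rows of `X` forming an invertible block `M`. Bounding the other `n - q` factors
of the likelihood by the mode `f_Z(0 | ω)`, the `β`-integral is at most
`f_Z(0 | ω) ^ (n - q) * |det M|⁻¹` times the integral over `ℝ^q` of a product of densities,
since the `q` selected residuals are an invertible affine image of `β`. That integral is `1`,
and integrating against the prior density finishes the proof. -/

theorem Matrix.exists_injective_det_submatrix_ne_zero {m n K : Type*} [Fintype m] [Fintype n]
    [DecidableEq n] [Field K] (X : Matrix m n K) (hX : X.rank = Fintype.card n) :
    ∃ s : n → m, Function.Injective s ∧ (X.submatrix s id).det ≠ 0 := by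
  obtain ⟨κ, a, ha, hspan, hind⟩ := exists_linearIndependent' K X.row
  have : Finite κ := hind.finite
  have : Fintype κ := Fintype.ofFinite κ
  have hcard : Fintype.card κ = Fintype.card n := by
    rw [linearIndependent_iff_card_eq_finrank_span.mp hind, Set.finrank, hspan, ← hX,
      Matrix.rank_eq_finrank_span_row]
  let e : n ≃ κ := (Fintype.equivOfCardEq hcard).symm
  refine ⟨a ∘ e, ha.comp e.injective, ?_⟩
  have hrows : LinearIndependent K (X.submatrix (a ∘ e) id).row := hind.comp e e.injective
  exact (Matrix.isUnit_iff_isUnit_det _).mp (Matrix.linearIndependent_rows_iff_isUnit.mp hrows)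
    |>.ne_zero

theorem Finset.prod_le_pow_card_sub_mul_prod_comp {ι κ R : Type*} [Fintype ι] [Fintype κ]
    [DecidableEq ι] [CommSemiring R] [PartialOrder R] [IsOrderedRing R] {g : ι → R} {a : R}
    (hg0 : ∀ i, 0 ≤ g i) (hga : ∀ i, g i ≤ a) {s : κ → ι} (hs : Function.Injective s) :
    ∏ i, g i ≤ a ^ (Fintype.card ι - Fintype.card κ) * ∏ j, g (s j) := by
  set T := Finset.univ.image s
  have hT : T.card = Fintype.card κ := Finset.card_image_of_injective _ hs
  calc ∏ i, g i = (∏ i ∈ Finset.univ \ T, g i) * ∏ i ∈ T, g i :=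
        (Finset.prod_sdiff (Finset.subset_univ T)).symm
    _ ≤ a ^ (Finset.univ \ T).card * ∏ i ∈ T, g i := by
        refine mul_le_mul_of_nonneg_right ?_ (Finset.prod_nonneg fun i _ => hg0 i)
        exact (Finset.prod_le_prod (fun i _ => hg0 i) fun i _ => hga i).trans_eq
          (Finset.prod_const a)
    _ = a ^ (Fintype.card ι - Fintype.card κ) * ∏ j, g (s j) := by
        rw [Finset.card_sdiff_of_subset (Finset.subset_univ T), hT, Finset.card_univ,
          Finset.prod_image fun _ _ _ _ h => hs h]

theorem lintegral_comp_linearMap {E : Type*} [NormedAddCommGroup E] [NormedSpace ℝ E]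
    [MeasurableSpace E] [BorelSpace E] [FiniteDimensional ℝ E] (μ : Measure E)
    [μ.IsAddHaarMeasure] {f : E →ₗ[ℝ] E} (hf : LinearMap.det f ≠ 0) (g : E → ENNReal) :
    ∫⁻ x, g (f x) ∂μ = ENNReal.ofReal |(LinearMap.det f)⁻¹| * ∫⁻ x, g x ∂μ := by
  let e := (f.equivOfDetNeZero hf).toContinuousLinearEquiv.toHomeomorph.toMeasurableEquiv
  have he : ⇑e = ⇑f := rfl
  rw [← smul_eq_mul, ← lintegral_smul_measure,
    ← Measure.map_linearMap_addHaar_eq_smul_addHaar μ hf, ← he, lintegral_map_equiv]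

theorem lintegral_ofReal_prod_of_integral_eq_one {ι E : Type*} [Fintype ι] [MeasureSpace E]
    [SigmaFinite (volume : Measure E)] {f : E → ℝ} (hf0 : ∀ x, 0 ≤ f x) (hf1 : ∫ x, f x = 1) :
    ∫⁻ z : ι → E, ENNReal.ofReal (∏ j, f (z j)) = 1 := by
  have hf : Integrable f := by
    by_contra h
    rw [integral_undef h] at hf1
    exact zero_ne_one hf1
  have hprod : ∫ z : ι → E, ∏ j, f (z j) = 1 := by
    rw [integral_fintype_prod_volume_eq_pow, hf1, one_pow]
  have hint : Integrable fun z : ι → E => ∏ j, f (z j) := Integrable.fintype_prod fun _ => hf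
  rw [← ofReal_integral_eq_lintegral_ofReal hint
      (.of_forall fun z => Finset.prod_nonneg fun j _ => hf0 (z j)), hprod, ENNReal.ofReal_one]

theorem lintegral_ofReal_prod_residual_le {m k : Type*} [Fintype m] [Fintype k] [DecidableEq m]
    [DecidableEq k] {f : ℝ → ℝ} (hf0 : ∀ x, 0 ≤ f x) (hf1 : ∫ x, f x = 1)
    (hmode : ∀ x, f x ≤ f 0) (X : Matrix m k ℝ) (y : m → ℝ) {s : k → m}
    (hs : Function.Injective s) (hdet : (X.submatrix s id).det ≠ 0) :
    ∫⁻ β, ENNReal.ofReal (∏ i, f ((y - X *ᵥ β) i)) ≤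
      ENNReal.ofReal (f 0 ^ (Fintype.card m - Fintype.card k)) *
        ENNReal.ofReal |(X.submatrix s id).det⁻¹| := by
  set C := ENNReal.ofReal (f 0 ^ (Fintype.card m - Fintype.card k))
  set G : (k → ℝ) → ENNReal := fun z => ENNReal.ofReal (∏ j, f (z j))
  have hpt : ∀ β, ENNReal.ofReal (∏ i, f ((y - X *ᵥ β) i)) ≤
      C * G (y ∘ s - X.submatrix s id *ᵥ β) := fun β => by
    rw [← ENNReal.ofReal_mul (pow_nonneg (hf0 0) _)]
    exact ENNReal.ofReal_le_ofReal
      (Finset.prod_le_pow_card_sub_mul_prod_comp (fun _ => hf0 _) (fun _ => hmode _) hs)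
  have hdet' : LinearMap.det (X.submatrix s id).toLin' ≠ 0 := by
    rwa [LinearMap.det_toLin']
  calc ∫⁻ β, ENNReal.ofReal (∏ i, f ((y - X *ᵥ β) i))
      ≤ ∫⁻ β, C * G (y ∘ s - X.submatrix s id *ᵥ β) := lintegral_mono hpt
    _ = C * ∫⁻ β, G (y ∘ s - (X.submatrix s id).toLin' β) :=
        lintegral_const_mul' _ _ ENNReal.ofReal_ne_top
    _ = C * ENNReal.ofReal |(X.submatrix s id).det⁻¹| := by
        rw [lintegral_comp_linearMap volume hdet' fun z => G (y ∘ s - z), LinearMap.det_toLin',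
          lintegral_sub_left_eq_self, lintegral_ofReal_prod_of_integral_eq_one hf0 hf1, mul_one]

theorem posterior_propriety_flat_prior_regression_general
    {Θ : Type*} [MeasurableSpace Θ] (ν : Measure Θ)
    (fZ : Θ → ℝ → ℝ) (p : Θ → ℝ)
    (hfZ_nonneg : ∀ ω y, 0 ≤ fZ ω y)
    (hfZ_density : ∀ ω, ∫ y, fZ ω y = 1)
    (hmode : ∀ ω y, fZ ω y ≤ fZ ω 0)
    (hp_nonneg : ∀ ω, 0 ≤ p ω)
    (n q : ℕ)
    (X : Matrix (Fin n) (Fin q) ℝ) (hrank : X.rank = q)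
    (y : Fin n → ℝ)
    (hfin : ∫⁻ ω, ENNReal.ofReal ((fZ ω 0) ^ (n - q) * p ω) ∂ν < ⊤) :
    ∫⁻ ω, (∫⁻ β : Fin q → ℝ,
      ENNReal.ofReal ((∏ i, fZ ω (y i - ∑ j, X i j * β j)) * p ω)) ∂ν < ⊤ := by
  obtain ⟨s, hs, hdet⟩ :=
    X.exists_injective_det_submatrix_ne_zero (by rw [hrank, Fintype.card_fin])
  set d := ENNReal.ofReal |(X.submatrix s id).det⁻¹|
  have hbound : ∀ ω, ∫⁻ β : Fin q → ℝ,
      ENNReal.ofReal ((∏ i, fZ ω (y i - ∑ j, X i j * β j)) * p ω) ≤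
        ENNReal.ofReal ((fZ ω 0) ^ (n - q) * p ω) * d := fun ω => by
    have h := lintegral_ofReal_prod_residual_le (hfZ_nonneg ω) (hfZ_density ω) (hmode ω) X y hs hdet
    simp only [Fintype.card_fin] at h
    simp_rw [ENNReal.ofReal_mul' (hp_nonneg ω)]
    rw [lintegral_mul_const' _ _ ENNReal.ofReal_ne_top, mul_right_comm]
    exact mul_le_mul_left h _
  calc _ ≤ ∫⁻ ω, ENNReal.ofReal ((fZ ω 0) ^ (n - q) * p ω) * d ∂ν := lintegral_mono hbound
    _ = (∫⁻ ω, ENNReal.ofReal ((fZ ω 0) ^ (n - q) * p ω) ∂ν) * d :=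
        lintegral_mul_const' _ _ ENNReal.ofReal_ne_top
    _ < ⊤ := ENNReal.mul_lt_top hfin ENNReal.ofReal_lt_top

/-- Posterior propriety under a flat prior on the regression coefficients (Theorem 2). -/
theorem posterior_propriety_flat_prior_regression
    {Θ : Type*} [MeasurableSpace Θ] (ν : Measure Θ)
    (fZ : Θ → ℝ → ℝ) (p : Θ → ℝ)
    (hfZ_meas : Measurable (Function.uncurry fZ))
    (hfZ_nonneg : ∀ ω y, 0 ≤ fZ ω y)
    (hfZ_density : ∀ ω, ∫ y, fZ ω y = 1)
    (hmode : ∀ ω y, fZ ω y ≤ fZ ω 0)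
    (hp_nonneg : ∀ ω, 0 ≤ p ω)
    (hp_density : ∫⁻ ω, ENNReal.ofReal (p ω) ∂ν = 1)
    (n q : ℕ) (hqn : q ≤ n)
    (X : Matrix (Fin n) (Fin q) ℝ) (hrank : X.rank = q)
    (y : Fin n → ℝ)
    (hfin : ∫⁻ ω, ENNReal.ofReal ((fZ ω 0) ^ (n - q) * p ω) ∂ν < ⊤) :
    ∫⁻ ω, (∫⁻ β : Fin q → ℝ,
      ENNReal.ofReal ((∏ i, fZ ω (y i - ∑ j, X i j * β j)) * p ω)) ∂ν < ⊤ :=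
  posterior_propriety_flat_prior_regression_general ν fZ p hfZ_nonneg hfZ_density hmode hp_nonneg n
    q X hrank y hfin
end

section
/- Let a, b > 0 and let p(x) = (b^a / Γ(a)) x^{−a−1} e^{−b/x} for x > 0 be the density of the inverse gamma distribution with shape a and scale b. Then for any integers p ≤ n, ∫₀^∞ (Γ(0.5x + 0.5) / Γ(0.5x))^{n−p} · x^{(p−n)/2} · p(x) dx < ∞. -/
/-!
Log-convexity of `Γ` gives `Γ(t + 1/2) ≤ Γ(t)^{1/2} Γ(t + 1)^{1/2} = √t Γ(t)`, so the Gamma ratio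
`Γ(x/2 + 1/2) / Γ(x/2)` is at most `√x` and its `(n - p)`-th power is cancelled by
`x^{(p - n)/2}`. The integrand is therefore dominated by the inverse gamma density, which is
integrable: the substitution `y = 1/x` turns it into a Gamma integral.
-/

open MeasureTheory Real Set

theorem Real.Gamma_add_half_le_sqrt_mul_Gamma {t : ℝ} (ht : 0 < t) :
    Gamma (t + 1 / 2) ≤ √t * Gamma t := by
  have hΓ := (Gamma_pos_of_pos ht).le
  calc Gamma (t + 1 / 2) = Gamma (1 / 2 * t + 1 / 2 * (t + 1)) := by ring_nf
    _ ≤ Gamma t ^ (1 / 2 : ℝ) * Gamma (t + 1) ^ (1 / 2 : ℝ) :=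
      Gamma_mul_add_mul_le_rpow_Gamma_mul_rpow_Gamma ht (by linarith) (by norm_num)
        (by norm_num) (by norm_num)
    _ = √t * Gamma t := by
      rw [Gamma_add_one ht.ne', ← sqrt_eq_rpow, ← sqrt_eq_rpow, sqrt_mul ht.le,
        mul_left_comm, mul_self_sqrt hΓ]

theorem Real.Gamma_half_add_half_div_Gamma_half_le_sqrt {x : ℝ} (hx : 0 < x) :
    Gamma (0.5 * x + 0.5) / Gamma (0.5 * x) ≤ √x := by
  have ht : 0 < 0.5 * x := by positivity
  rw [div_le_iff₀ (Gamma_pos_of_pos ht)]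
  calc Gamma (0.5 * x + 0.5) = Gamma (0.5 * x + 1 / 2) := by norm_num
    _ ≤ √(0.5 * x) * Gamma (0.5 * x) := Gamma_add_half_le_sqrt_mul_Gamma ht
    _ ≤ √x * Gamma (0.5 * x) := by gcongr; linarith

theorem Real.Gamma_ratio_pow_mul_rpow_le_one {x : ℝ} (hx : 0 < x) (k : ℕ) :
    (Gamma (0.5 * x + 0.5) / Gamma (0.5 * x)) ^ k * x ^ (-(k : ℝ) / 2) ≤ 1 := by
  have hratio : 0 ≤ Gamma (0.5 * x + 0.5) / Gamma (0.5 * x) :=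
    div_nonneg (Gamma_pos_of_pos (by positivity)).le (Gamma_pos_of_pos (by positivity)).le
  calc (Gamma (0.5 * x + 0.5) / Gamma (0.5 * x)) ^ k * x ^ (-(k : ℝ) / 2)
      ≤ √x ^ k * x ^ (-(k : ℝ) / 2) := by
        gcongr
        exact Gamma_half_add_half_div_Gamma_half_le_sqrt hx
    _ = 1 := by
        rw [sqrt_eq_rpow, ← rpow_natCast, ← rpow_mul hx.le, ← rpow_add hx]
        ring_nf
        exact rpow_zero x

theorem integrableOn_rpow_neg_sub_one_mul_exp_neg_div {a b : ℝ} (ha : 0 < a) (hb : 0 < b) :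
    IntegrableOn (fun x : ℝ ↦ x ^ (-a - 1) * exp (-b / x)) (Ioi 0) := by
  have hGamma : IntegrableOn (fun y : ℝ ↦ y ^ (a - 1) * exp (-b * y ^ (1 : ℝ))) (Ioi 0) :=
    integrableOn_rpow_mul_exp_neg_mul_rpow (by linarith) one_pos hb
  refine ((integrableOn_Ioi_comp_rpow_iff' _ (by norm_num : (-1 : ℝ) ≠ 0)).mpr
    hGamma).congr_fun (fun x hx ↦ ?_) measurableSet_Ioi
  have hx : 0 < x := hx
  dsimp only
  rw [smul_eq_mul, rpow_one, rpow_neg_one, ← mul_assoc, ← rpow_neg_one x,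
    ← rpow_mul hx.le, ← rpow_add hx, rpow_neg_one, div_eq_mul_inv]
  ring_nf

/-- Lemma A.1: a Gamma-ratio integral against the inverse gamma density is finite. -/
theorem gamma_ratio_inverse_gamma_integral_finite
    (a b : ℝ) (ha : 0 < a) (hb : 0 < b) (n p : ℕ) (hpn : p ≤ n) :
    ∫⁻ x in Set.Ioi (0:ℝ),
      ENNReal.ofReal
        ((Real.Gamma (0.5 * x + 0.5) / Real.Gamma (0.5 * x)) ^ (n - p) *
          x ^ (((p : ℝ) - n) / 2) *
          (b ^ a / Real.Gamma a * x ^ (-a - 1) * Real.exp (-b / x))) < ⊤ := by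
  set density : ℝ → ℝ := fun x ↦ b ^ a / Gamma a * x ^ (-a - 1) * exp (-b / x)
  have hdensity : IntegrableOn density (Ioi 0) := by
    simpa only [IntegrableOn, density, mul_assoc] using
      (integrableOn_rpow_neg_sub_one_mul_exp_neg_div ha hb).const_mul (b ^ a / Gamma a)
  have hexp : ((p : ℝ) - n) / 2 = -((n - p : ℕ) : ℝ) / 2 := by
    rw [Nat.cast_sub hpn]; ring
  have hdom : ∀ x ∈ Ioi (0 : ℝ), ENNReal.ofReal
      ((Gamma (0.5 * x + 0.5) / Gamma (0.5 * x)) ^ (n - p) * x ^ (((p : ℝ) - n) / 2) *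
        density x) ≤ ENNReal.ofReal (density x) := fun x hx ↦ by
    have hx : 0 < x := hx
    have := Gamma_pos_of_pos ha
    refine ENNReal.ofReal_le_ofReal (mul_le_of_le_one_left (by positivity) ?_)
    rw [hexp]
    exact Gamma_ratio_pow_mul_rpow_le_one hx (n - p)
  exact (setLIntegral_mono' measurableSet_Ioi hdom).trans_lt hdensity.setLIntegral_lt_top
end

section
/- Let f(y | w, θ, ξ₁, ξ₂) = w f₁(y | θ, ξ₁) + (1−w) f₂(y | θ, ξ₂) be a two-component mixture density where f₁, f₂ are nonnegative, and suppose the parameter τ appears only in ξ₁ and not in ξ₂ (so that f₂ does not depend on τ). Let p(τ) be an improper prior on the parameter space Θ_τ of τ, i.e., p(τ) ≥ 0 with ∫_{Θ_τ} p(τ) dτ = ∞. Fix observations y₁, …, y_n, a weight w ∈ [0, 1), a mode θ, and the remaining parameters, and suppose f₂(y_i | θ, ξ₂) > 0 for each i = 1, …, n. Then ∫_{Θ_τ} ∏_{i=1}^{n} f(y_i | w, θ, ξ₁(τ), ξ₂) p(τ) dτ = ∞, i.e., the posterior distribution is improper. -/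
open MeasureTheory

/-- Proposition 2: an improper prior on a parameter appearing only in one mixture
component leads to an improper posterior. -/
theorem improper_prior_improper_posterior
    {α : Type*} [MeasurableSpace α] (μ : Measure α)
    (n : ℕ) (y : Fin n → ℝ) (w : ℝ) (hw : w ∈ Set.Ico (0:ℝ) 1)
    (f₁ : ℝ → α → ℝ) (f₂ : ℝ → ℝ)
    (hf₁ : ∀ t τ, 0 ≤ f₁ t τ) (hf₂ : ∀ t, 0 ≤ f₂ t)
    (hf₂pos : ∀ i, 0 < f₂ (y i))
    (p : α → ℝ) (hp : ∀ τ, 0 ≤ p τ)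
    (himproper : ∫⁻ τ, ENNReal.ofReal (p τ) ∂μ = ⊤) :
    ∫⁻ τ, ENNReal.ofReal
      ((∏ i, (w * f₁ (y i) τ + (1 - w) * f₂ (y i))) * p τ) ∂μ = ⊤ := by
  obtain ⟨hw0, hw1⟩ := hw
  set c : ℝ := ∏ i, ((1 - w) * f₂ (y i)) with hc
  have hcpos : 0 < c :=
    Finset.prod_pos fun i _ => mul_pos (by linarith) (hf₂pos i)
  have hle : ∀ τ, ENNReal.ofReal c * ENNReal.ofReal (p τ) ≤
      ENNReal.ofReal ((∏ i, (w * f₁ (y i) τ + (1 - w) * f₂ (y i))) * p τ) := by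
    intro τ
    rw [← ENNReal.ofReal_mul hcpos.le]
    refine ENNReal.ofReal_le_ofReal ?_
    refine mul_le_mul_of_nonneg_right ?_ (hp τ)
    refine Finset.prod_le_prod (fun i _ => mul_nonneg (by linarith) (hf₂pos i).le) ?_
    intro i _
    have := mul_nonneg hw0 (hf₁ (y i) τ)
    linarith
  have h := lintegral_mono (μ := μ) hle
  rwa [lintegral_const_mul' _ _ ENNReal.ofReal_ne_top, himproper,
    ENNReal.mul_top ((ENNReal.ofReal_pos.mpr hcpos).ne'), top_le_iff] at h
end

section
/- Let f_logN(y | μ, ν) = (1/(y ν √(2π))) exp(−(ln y − μ)²/(2ν²)) 𝟙(y > 0) be the lognormal density, and define the lognormal mixture (logNM) density f_logNM(y | w, θ, μ₁, ν₁, μ₂, ν₂) = w f_logN(exp(μ₁ − ν₁²) − (y − θ) | μ₁, ν₁) + (1−w) f_logN(exp(μ₂ − ν₂²) + (y − θ) | μ₂, ν₂). Fix y, θ ∈ ℝ, w ∈ [0, 1), ν₁, ν₂ > 0, and μ₂ ∈ ℝ with y − θ > −exp(μ₂ − ν₂²). Then ∫_{−∞}^{+∞} f_logNM(y | w, θ,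 μ₁, ν₁, μ₂, ν₂) dμ₁ = ∞; hence endowing μ₁ with the flat prior p(μ₁) ∝ 1 leads to an improper posterior distribution under the logNM model. -/
open MeasureTheory

/-- The lognormal density with parameters `μ` and `ν`. -/
noncomputable def flogN (μ ν y : ℝ) : ℝ :=
  if y > 0 then (1 / (y * ν * Real.sqrt (2 * Real.pi))) *
    Real.exp (-(Real.log y - μ) ^ 2 / (2 * ν ^ 2)) else 0

/-- The lognormal mixture (logNM) density. -/
noncomputable def flogNM (w θ μ₁ ν₁ μ₂ ν₂ y : ℝ) : ℝ :=
  w * flogN μ₁ ν₁ (Real.exp (μ₁ - ν₁ ^ 2) - (y - θ)) +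
    (1 - w) * flogN μ₂ ν₂ (Real.exp (μ₂ - ν₂ ^ 2) + (y - θ))

lemma flogN_nonneg (μ ν y : ℝ) (hν : 0 < ν) : 0 ≤ flogN μ ν y := by
  unfold flogN
  split
  · positivity
  · exact le_refl 0

/-- A flat prior on `μ₁` leads to an improper posterior under the logNM model. -/
theorem flat_prior_mu1_improper_logNM
    (y θ w ν₁ ν₂ μ₂ : ℝ) (hw : w ∈ Set.Ico (0:ℝ) 1)
    (hν₁ : 0 < ν₁) (hν₂ : 0 < ν₂)
    (hy : y - θ > -Real.exp (μ₂ - ν₂ ^ 2)) :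
    ∫⁻ μ₁ : ℝ, ENNReal.ofReal (flogNM w θ μ₁ ν₁ μ₂ ν₂ y) = ⊤ := by
  obtain ⟨hw0, hw1⟩ := hw
  set z := Real.exp (μ₂ - ν₂ ^ 2) + (y - θ) with hz
  have hzpos : 0 < z := by linarith
  have hc : 0 < flogN μ₂ ν₂ z := by
    unfold flogN
    rw [if_pos hzpos]
    positivity
  set c : ℝ := (1 - w) * flogN μ₂ ν₂ z with hcdef
  have hcpos : 0 < c := mul_pos (by linarith) hc
  have hle : ∀ μ₁ : ℝ, ENNReal.ofReal c ≤ ENNReal.ofReal (flogNM w θ μ₁ ν₁ μ₂ ν₂ y) := by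
    intro μ₁
    apply ENNReal.ofReal_le_ofReal
    unfold flogNM
    have h1 : 0 ≤ w * flogN μ₁ ν₁ (Real.exp (μ₁ - ν₁ ^ 2) - (y - θ)) :=
      mul_nonneg hw0 (flogN_nonneg _ _ _ hν₁)
    rw [hcdef, hz]
    linarith
  have : (⊤ : ENNReal) = ∫⁻ _ : ℝ, ENNReal.ofReal c := by
    rw [lintegral_const]
    simp [Real.volume_univ, ENNReal.mul_top, ENNReal.ofReal_eq_zero, not_le.mpr hcpos]
  rw [eq_top_iff, this]
  exact lintegral_mono hle
end

section
/- For any w ∈ [0,1], θ ∈ ℝ, and σ₁, σ₂ > 0, the flexible Gumbel density f_FG(y | w, θ, σ₁, σ₂) = w f_Gumbel(−y | −θ, σ₁) + (1−w) f_Gumbel(y | θ, σ₂) attains its global maximum at y = θ: for all y ∈ ℝ, f_FG(y | w, θ, σ₁, σ₂) ≤ f_FG(θ | w, θ, σ₁, σ₂) = e^{−1} (w/σ₁ + (1−w)/σ₂). -/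
/-- The Gumbel density with location `θ` and scale `σ`. -/
noncomputable def fGumbel (θ σ y : ℝ) : ℝ :=
  (1 / σ) * Real.exp (-(y - θ) / σ - Real.exp (-(y - θ) / σ))

/-- The flexible Gumbel (FG) density with weight `w`, mode `θ`, and scales `σ₁, σ₂`. -/
noncomputable def fFG (w θ σ₁ σ₂ y : ℝ) : ℝ :=
  w * fGumbel (-θ) σ₁ (-y) + (1 - w) * fGumbel θ σ₂ y

lemma gumbel_le (θ σ y : ℝ) (hσ : 0 < σ) : fGumbel θ σ y ≤ (1 / σ) * Real.exp (-1) := by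
  unfold fGumbel
  have h := Real.add_one_le_exp (-(y - θ) / σ)
  have : -(y - θ) / σ - Real.exp (-(y - θ) / σ) ≤ -1 := by linarith
  have := Real.exp_le_exp.mpr this
  have hpos : (0:ℝ) < 1 / σ := by positivity
  nlinarith [Real.exp_pos (-(y - θ) / σ - Real.exp (-(y - θ) / σ))]

lemma gumbel_at_mode (θ σ : ℝ) : fGumbel θ σ θ = (1 / σ) * Real.exp (-1) := by
  unfold fGumbel
  norm_num

/-- The FG density attains its global maximum at the mode `θ`, where it equals
`e⁻¹ (w/σ₁ + (1-w)/σ₂)`. -/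
theorem fFG_mode (w θ σ₁ σ₂ : ℝ) (hw : w ∈ Set.Icc (0:ℝ) 1)
    (h1 : 0 < σ₁) (h2 : 0 < σ₂) :
    (∀ y : ℝ, fFG w θ σ₁ σ₂ y ≤ fFG w θ σ₁ σ₂ θ) ∧
      fFG w θ σ₁ σ₂ θ = Real.exp (-1) * (w / σ₁ + (1 - w) / σ₂) := by
  obtain ⟨hw0, hw1⟩ := hw
  have hmode : fFG w θ σ₁ σ₂ θ = Real.exp (-1) * (w / σ₁ + (1 - w) / σ₂) := by
    unfold fFG
    have e1 : fGumbel (-θ) σ₁ (-θ) = (1 / σ₁) * Real.exp (-1) := gumbel_at_mode _ _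
    rw [e1, gumbel_at_mode]
    ring
  refine ⟨fun y => ?_, hmode⟩
  rw [hmode]
  unfold fFG
  have g1 := gumbel_le (-θ) σ₁ (-y) h1
  have g2 := gumbel_le θ σ₂ y h2
  have t1 : w * fGumbel (-θ) σ₁ (-y) ≤ w * ((1 / σ₁) * Real.exp (-1)) :=
    mul_le_mul_of_nonneg_left g1 hw0
  have t2 : (1 - w) * fGumbel θ σ₂ y ≤ (1 - w) * ((1 / σ₂) * Real.exp (-1)) :=
    mul_le_mul_of_nonneg_left g2 (by linarith)
  calc w * fGumbel (-θ) σ₁ (-y) + (1 - w) * fGumbel θ σ₂ y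
      ≤ w * ((1 / σ₁) * Real.exp (-1)) + (1 - w) * ((1 / σ₂) * Real.exp (-1)) := by linarith
    _ = Real.exp (-1) * (w / σ₁ + (1 - w) / σ₂) := by ring
end
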